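/- (Party monotonicity) Let v and v' be coalition value functions with v'(A) = v(A) for all A ⊆ N \ {i}, v'(C ∪ {i}) ≥ v(C ∪ {i}) for all C ⊆ N \ {i} (so v' ≥ v pointwise). Then for every party j ≠ i, the increase in Shapley value satisfies φ'_i - φ_i ≥ φ'_j - φ_j, where φ (resp. φ') denotes Shapley values with respect to v (resp. v'). -/
import Mathlib


def preceding {n : ℕ} (σ : Equiv.Perm (Fin n)) (i : Fin n) : Finset (Fin n) :=
  Finset.univ.filter (fun j => σ j < σ i)

/-- The Shapley value of party `i`: the average over all permutations of the
marginal contribution of `i` to the coalition of parties preceding it. -/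
noncomputable def shapley {n : ℕ} (v : Finset (Fin n) → ℝ) (i : Fin n) : ℝ :=
  (∑ σ : Equiv.Perm (Fin n), (v (insert i (preceding σ i)) - v (preceding σ i))) /
    (Nat.factorial n)

lemma notMem_preceding {n : ℕ} (σ : Equiv.Perm (Fin n)) (i : Fin n) :
    i ∉ preceding σ i := by simp [preceding]

lemma mem_preceding {n : ℕ} (σ : Equiv.Perm (Fin n)) (i k : Fin n) :
    k ∈ preceding σ i ↔ σ k < σ i := by simp [preceding]

theorem shapley_party_monotonicity {n : ℕ} (v v' : Finset (Fin n) → ℝ) (i : Fin n)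
    (hsame : ∀ A : Finset (Fin n), i ∉ A → v' A = v A)
    (hge : ∀ C : Finset (Fin n), i ∉ C → v (insert i C) ≤ v' (insert i C)) :
    ∀ j : Fin n, j ≠ i →
      shapley v' j - shapley v j ≤ shapley v' i - shapley v i := by
  intro j hj
  unfold shapley
  rw [div_sub_div_same, div_sub_div_same, div_le_div_iff_of_pos_right (by positivity)]
  rw [← Finset.sum_sub_distrib, ← Finset.sum_sub_distrib]
  set f : Equiv.Perm (Fin n) → ℝ := fun σ =>
    (v' (insert j (preceding σ j)) - v' (preceding σ j)) -
      (v (insert j (preceding σ j)) - v (preceding σ j)) with hf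
  set g : Equiv.Perm (Fin n) → ℝ := fun σ =>
    (v' (insert i (preceding σ i)) - v' (preceding σ i)) -
      (v (insert i (preceding σ i)) - v (preceding σ i)) with hg
  show ∑ σ, f σ ≤ ∑ σ, g σ
  rw [← Equiv.sum_comp (Equiv.mulRight (Equiv.swap i j)) f]
  apply Finset.sum_le_sum
  intro σ _
  have hg0 : g σ = v' (insert i (preceding σ i)) - v (insert i (preceding σ i)) := by
    rw [hg]
    have := hsame (preceding σ i) (notMem_preceding σ i)
    ring_nf
    rw [this]
    ring
  have hgnn : 0 ≤ g σ := by
    rw [hg0]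
    have := hge (preceding σ i) (notMem_preceding σ i)
    linarith
  set ρ : Equiv.Perm (Fin n) := σ * Equiv.swap i j with hρ
  show f ρ ≤ g σ
  rcases lt_or_ge (σ i) (σ j) with hlt | hle
  · -- i not in insert j (preceding ρ j); f ρ = 0
    have hiP : i ∉ preceding ρ j := by
      simp only [mem_preceding, hρ, Equiv.Perm.mul_apply, Equiv.swap_apply_left,
        Equiv.swap_apply_right]
      exact not_lt.2 hlt.le
    have hiI : i ∉ insert j (preceding ρ j) := by
      simp [Finset.mem_insert, hiP, hj.symm]
    have h1 := hsame _ hiI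
    have h2 := hsame _ hiP
    have : f ρ = 0 := by rw [hf]; simp only; rw [h1, h2]; ring
    linarith
  · have hne : σ j ≠ σ i := fun h => hj (σ.injective h)
    have hslt : σ j < σ i := lt_of_le_of_ne hle hne
    -- key set identity
    have hiP : i ∈ preceding ρ j := by
      simp only [mem_preceding, hρ, Equiv.Perm.mul_apply, Equiv.swap_apply_left,
        Equiv.swap_apply_right]
      exact hslt
    have hkey : insert j (preceding ρ j) = insert i (preceding σ i) := by
      ext k
      simp only [Finset.mem_insert, mem_preceding, hρ, Equiv.Perm.mul_apply,
        Equiv.swap_apply_right]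
      by_cases hki : k = i
      · subst hki
        simp [Equiv.swap_apply_left, hslt, hj.symm]
      · by_cases hkj : k = j
        · subst hkj; simp [hslt]
        · rw [Equiv.swap_apply_of_ne_of_ne hki hkj]
          simp [hki, hkj]
    -- preceding ρ j contains i, so v'(preceding ρ j) ≥ v(preceding ρ j)
    have hPge : v (preceding ρ j) ≤ v' (preceding ρ j) := by
      have h1 : i ∉ (preceding ρ j).erase i := Finset.notMem_erase i _
      have h2 : insert i ((preceding ρ j).erase i) = preceding ρ j :=
        Finset.insert_erase hiP
      have := hge _ h1
      rwa [h2] at this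
    have hIge : v (insert j (preceding ρ j)) ≤ v' (insert j (preceding ρ j)) := by
      rw [hkey]; exact hge (preceding σ i) (notMem_preceding σ i)
    have : f ρ ≤ v' (insert j (preceding ρ j)) - v (insert j (preceding ρ j)) := by
      rw [hf]; simp only; linarith
    rw [hkey] at this
    rw [hg0]
    linarith
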